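/- arXiv:1111.1823 — 7 statements merged into one kernel-verified Lean document; each statement's English description precedes it below -/
import Mathlib

section
/- If X is a prefix code over a finite alphabet A, then the palindromization map ψ_X : X* → PAL is injective, i.e., if x₁,…,x_m, x'₁,…,x'_n ∈ X and ψ_X(x₁⋯x_m) = ψ_X(x'₁⋯x'_n), then m = n and x_i = x'_i for all i. -/
open List

/-- Right palindromic closure: `w⁺ = u Q u~` where `Q` is the longest palindromic
suffix of `w = uQ`; equivalently the shortest palindrome having `w` as a prefix. -/
noncomputable def palClosure {A : Type*} (w : List A) : List A :=
  letI : DecidablePred fun k => (w.drop k).reverse = w.drop k :=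
    fun _ => Classical.propDecidable _
  w ++ (w.take (Nat.find (⟨w.length, by simp⟩ :
    ∃ k, (w.drop k).reverse = w.drop k))).reverse

/-- The palindromization map `ψ_X` relative to a code `X`, evaluated on the
(unique) `X`-factorization `l = [x₁, …, xₙ]` of a word of `X*`. -/
noncomputable def psiList {A : Type*} (l : List (List A)) : List A :=
  l.foldl (fun p x => palClosure (p ++ x)) []

/-- The (usual) palindromization map `ψ` on words, letter by letter. -/
noncomputable def psiWord {A : Type*} (w : List A) : List A :=
  w.foldl (fun p a => palClosure (p ++ [a])) []

/-- `X` is a code: nonempty words with unique factorization over `X`. -/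
def IsCode {A : Type*} (X : Set (List A)) : Prop :=
  (∀ x ∈ X, x ≠ []) ∧
  ∀ l l' : List (List A), (∀ w ∈ l, w ∈ X) → (∀ w ∈ l', w ∈ X) →
    l.flatten = l'.flatten → l = l'

/-- `X` is a prefix code: nonempty words, none a proper prefix of another. -/
def IsPrefixCode {A : Type*} (X : Set (List A)) : Prop :=
  (∀ x ∈ X, x ≠ []) ∧ ∀ x ∈ X, ∀ y ∈ X, x <+: y → x = y

/-- `X` is a maximal prefix code over `A`. -/
def IsMaximalPrefixCode {A : Type*} (X : Set (List A)) : Prop :=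
  IsPrefixCode X ∧ ∀ Y : Set (List A), IsPrefixCode Y → X ⊆ Y → X = Y

/-- `w ∈ X*`. -/
def InStar {A : Type*} (X : Set (List A)) (w : List A) : Prop :=
  ∃ l : List (List A), (∀ u ∈ l, u ∈ X) ∧ l.flatten = w

/-- The finite word `w` is a prefix of the infinite word `s`. -/
def PrefixOfInf {A : Type*} (w : List A) (s : ℕ → A) : Prop :=
  ∀ i : ℕ, ∀ h : i < w.length, w.get ⟨i, h⟩ = s i

/-- The finite word `w` is a factor of the infinite word `s`. -/
def FactorOfInf {A : Type*} (w : List A) (s : ℕ → A) : Prop :=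
  ∃ i : ℕ, w = List.ofFn fun k : Fin w.length => s (i + k.1)

/-- `X` has finite deciphering delay. -/
def FiniteDecipheringDelay {A : Type*} (X : Set (List A)) : Prop :=
  ∃ k : ℕ, ∀ x ∈ X, ∀ x' ∈ X,
    (∃ (l l' : List (List A)) (r : List A),
      (∀ w ∈ l, w ∈ X) ∧ l.length = k ∧ (∀ w ∈ l', w ∈ X) ∧
      x ++ l.flatten ++ r = x' ++ l'.flatten) → x = x'

/-- The sequence `y = y₁y₂⋯ ∈ X^ω` is alternating. -/
def Alternating {A : Type*} (y : ℕ → List A) : Prop :=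
  ∃ a b : A, a ≠ b ∧ ∃ (lam : List A) (idx : ℕ → ℕ), StrictMono idx ∧
    ∀ k : ℕ, (lam ++ [a]) <+: y (idx (2 * k)) ∧ (lam ++ [b]) <+: y (idx (2 * k + 1))

/-- The infinite word `s` is ultimately periodic. -/
def UltimatelyPeriodic {A : Type*} (s : ℕ → A) : Prop :=
  ∃ p : ℕ, 0 < p ∧ ∃ N : ℕ, ∀ n ≥ N, s (n + p) = s n

/-- The infinite word `s` is uniformly recurrent: every factor occurs in every
sufficiently long factor of `s`. -/
def UniformlyRecurrent {A : Type*} (s : ℕ → A) : Prop :=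
  ∀ w : List A, FactorOfInf w s →
    ∃ N : ℕ, ∀ i : ℕ, w <:+: List.ofFn fun k : Fin N => s (i + k.1)

/-- Factor complexity of the infinite word `s`. -/
noncomputable def complexity {A : Type*} (s : ℕ → A) (n : ℕ) : ℕ :=
  {u : List A | u.length = n ∧ FactorOfInf u s}.ncard

/-- A word `w` is primitive if it is not a proper power. -/
def Primitive {A : Type*} (w : List A) : Prop :=
  ∀ (v : List A) (n : ℕ), 1 < n → w ≠ (List.replicate n v).flatten

lemma prefix_palClosure {A : Type*} (w : List A) : w <+: palClosure w :=
  ⟨_, rfl⟩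

lemma prefix_foldl_pal {A : Type*} (l : List (List A)) (p : List A) :
    p <+: l.foldl (fun p x => palClosure (p ++ x)) p := by
  induction l generalizing p with
  | nil => exact List.prefix_refl p
  | cons x t ih =>
    exact ((List.prefix_append p x).trans (prefix_palClosure (p ++ x))).trans (ih _)

lemma foldl_pal_inj {A : Type*} (X : Set (List A)) (hX : IsPrefixCode X) :
    ∀ (l l' : List (List A)) (p : List A), (∀ w ∈ l, w ∈ X) → (∀ w ∈ l', w ∈ X) →
      l.foldl (fun p x => palClosure (p ++ x)) p
        = l'.foldl (fun p x => palClosure (p ++ x)) p → l = l' := by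
  intro l
  induction l with
  | nil =>
    intro l' p _ hl' h
    cases l' with
    | nil => rfl
    | cons x t =>
      exfalso
      simp only [List.foldl_nil, List.foldl_cons] at h
      have h1 : p ++ x <+: t.foldl (fun p x => palClosure (p ++ x)) (palClosure (p ++ x)) :=
        (prefix_palClosure (p ++ x)).trans (prefix_foldl_pal t _)
      rw [← h] at h1
      have := h1.length_le
      simp only [List.length_append] at this
      have hx : x ≠ [] := hX.1 x (hl' x (by simp))
      have : 0 < x.length := List.length_pos_iff.mpr hx
      omega
  | cons x t ih =>
    intro l' p hl hl' h
    cases l' with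
    | nil =>
      exfalso
      simp only [List.foldl_nil, List.foldl_cons] at h
      have h1 : p ++ x <+: t.foldl (fun p x => palClosure (p ++ x)) (palClosure (p ++ x)) :=
        (prefix_palClosure (p ++ x)).trans (prefix_foldl_pal t _)
      rw [h] at h1
      have := h1.length_le
      simp only [List.length_append] at this
      have hx : x ≠ [] := hX.1 x (hl x (by simp))
      have : 0 < x.length := List.length_pos_iff.mpr hx
      omega
    | cons x' t' =>
      simp only [List.foldl_cons] at h
      have hx : p ++ x <+: t.foldl (fun p x => palClosure (p ++ x)) (palClosure (p ++ x)) :=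
        (prefix_palClosure (p ++ x)).trans (prefix_foldl_pal t _)
      have hx' : p ++ x' <+: t.foldl (fun p x => palClosure (p ++ x)) (palClosure (p ++ x)) := by
        rw [h]
        exact (prefix_palClosure (p ++ x')).trans (prefix_foldl_pal t' _)
      have hxX : x ∈ X := hl x (by simp)
      have hx'X : x' ∈ X := hl' x' (by simp)
      have hcomp := List.prefix_or_prefix_of_prefix hx hx'
      have hxx' : x = x' := by
        rcases hcomp with hc | hc
        · exact hX.2 x hxX x' hx'X ((List.prefix_append_right_inj p).mp hc)
        · exact (hX.2 x' hx'X x hxX ((List.prefix_append_right_inj p).mp hc)).symm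
      subst hxx'
      have ht : t = t' := ih t' (palClosure (p ++ x))
        (fun w hw => hl w (by simp [hw])) (fun w hw => hl' w (by simp [hw])) h
      rw [ht]

/-- If `X` is a prefix code, then `ψ_X` is injective. -/
theorem stmt1 {A : Type*} [Fintype A] (X : Set (List A)) (hX : IsPrefixCode X)
    (l l' : List (List A)) (hl : ∀ w ∈ l, w ∈ X) (hl' : ∀ w ∈ l', w ∈ X)
    (h : psiList l = psiList l') : l = l' :=
  foldl_pal_inj X hX l l' [] hl hl' h
end

section
/- Let X be a code over a finite alphabet A such that every element of X is both a palindrome and a primitive word. If the palindromization map ψ_X : X* → PAL is injective, then X is a prefix code. -/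
open List

section AuxPalin

variable {A : Type*}

private lemma periodic_mul {B : Type*} (f : ℕ → B) (p : ℕ) (h : ∀ n, f (n + p) = f n) :
    ∀ t n, f (n + p * t) = f n := by
  intro t
  induction t with
  | zero => simp
  | succ t ih =>
    intro n
    have e : n + p * (t + 1) = (n + p) + p * t := by ring
    rw [e, ih, h]

private lemma periodic_gcd {B : Type*} (f : ℕ → B) :
    ∀ p q : ℕ, (∀ n, f (n + p) = f n) → (∀ n, f (n + q) = f n) →
      ∀ n, f (n + Nat.gcd p q) = f n := by
  intro p q
  induction p, q using Nat.gcd.induction with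
  | H0 n => intro _ hq; simpa using hq
  | H1 p q hp ih =>
    intro hfp hfq
    rw [Nat.gcd_rec]
    refine ih ?_ hfp
    intro n
    have h1 : f (n + q % p) = f (n + q % p + p * (q / p)) := (periodic_mul f p hfp _ _).symm
    have h2 : n + q % p + p * (q / p) = n + q := by
      have := Nat.mod_add_div q p; omega
    rw [h1, h2, hfq]

private lemma getElem?_flatten_replicate (v : List A) :
    ∀ (n i : ℕ), i < n * v.length → (List.replicate n v).flatten[i]? = v[i % v.length]? := by
  intro n
  induction n with
  | zero => intro i hi; simp at hi
  | succ n ih =>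
    intro i hi
    rw [List.replicate_succ, List.flatten_cons]
    rcases lt_or_ge i v.length with h | h
    · rw [List.getElem?_append_left h, Nat.mod_eq_of_lt h]
    · have hmul : (n + 1) * v.length = n * v.length + v.length := by ring
      rw [List.getElem?_append_right h, ih (i - v.length) (by omega)]
      congr 1
      have hi' : i = (i - v.length) + v.length := by omega
      conv_rhs => rw [hi']
      rw [Nat.add_mod_right]

private lemma exists_window_rep (m k a : ℕ) (hm : 0 < m) :
    ∃ a', k ≤ a' ∧ a' < k + m ∧ (a' : ZMod m) = (a : ZMod m) := by
  refine ⟨k + (a + (m - k % m)) % m, Nat.le_add_right _ _, ?_, ?_⟩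
  · have := Nat.mod_lt (a + (m - k % m)) hm; omega
  · have hkm : k % m < m := Nat.mod_lt k hm
    have hs1 : (m - k % m) + k % m = m := by omega
    have hs2 : ((m - k % m : ℕ) : ZMod m) + ((k % m : ℕ) : ZMod m) = (m : ZMod m) := by
      exact_mod_cast congrArg (fun t : ℕ => (t : ZMod m)) hs1
    rw [ZMod.natCast_mod, ZMod.natCast_self] at hs2
    push_cast [ZMod.natCast_mod]
    linear_combination hs2

/-- Minimality: when `y` is primitive, `x` a proper nonempty palindromic-situation prefix,
no suffix of `y ++ y ++ x` starting before position `|y| - |x|` is a palindrome. -/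
private lemma corePalin {x y : List A} (hpre : x <+: y) (hypal : y.reverse = y)
    (hx0 : x ≠ []) (hlt : x.length < y.length) (hyprim : Primitive y) :
    ∀ k, k < y.length - x.length →
      ¬ (((y ++ y ++ x).drop k).reverse = (y ++ y ++ x).drop k) := by
  intro k hk hP
  set m := y.length with hm
  set q := x.length with hq
  have hm0 : 0 < m := by omega
  have hq0 : 0 < q := by rw [hq]; exact List.length_pos_iff.mpr hx0
  haveI : NeZero m := ⟨by omega⟩
  set w := y ++ y ++ x with hw
  have hwlen : w.length = 2 * m + q := by
    rw [hw]; simp only [List.length_append, ← hm, ← hq]; omega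
  set f : ℕ → Option A := fun n => y[((n : ZMod m)).val]? with hf
  have hcong : ∀ u v : ℕ, (u : ZMod m) = (v : ZMod m) → f u = f v := by
    intro u v h; simp only [hf, h]
  have hfval : ∀ n : ℕ, f n = y[n % m]? := by
    intro n; simp only [hf, ZMod.val_natCast]
  have htake : x = y.take q := List.prefix_iff_eq_take.mp hpre
  have hmodcast : ∀ a : ℕ, ((a % m : ℕ) : ZMod m) = (a : ZMod m) :=
    fun a => ZMod.natCast_mod a m
  -- `w` read through `f`
  have hwget : ∀ i : ℕ, i < 2 * m + q → w[i]? = f i := by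
    intro i hi
    rw [hfval]
    rcases lt_or_ge i m with h1 | h1
    · rw [hw, List.getElem?_append_left (by simp only [List.length_append, ← hm]; omega),
        List.getElem?_append_left (by omega : i < y.length), Nat.mod_eq_of_lt h1]
    · rcases lt_or_ge i (2 * m) with h2 | h2
      · rw [hw, List.getElem?_append_left (by simp only [List.length_append, ← hm]; omega),
          List.getElem?_append_right (by omega : y.length ≤ i)]
        congr 1
        have hh : i = (i - m) + m := by omega
        have e : i % m = i - m := by
          conv_lhs => rw [hh]
          rw [Nat.add_mod_right, Nat.mod_eq_of_lt (by omega : i - m < m)]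
        omega
      · rw [hw, List.getElem?_append_right
          (by simp only [List.length_append, ← hm]; omega : (y ++ y).length ≤ i)]
        have hix : i - (y ++ y).length = i - 2 * m := by
          simp only [List.length_append, ← hm]; omega
        rw [hix, htake, List.getElem?_take, if_pos (by omega : i - 2 * m < q)]
        congr 1
        have hh : i = ((i - 2 * m) + m) + m := by omega
        have e : i % m = i - 2 * m := by
          conv_lhs => rw [hh]
          rw [Nat.add_mod_right, Nat.add_mod_right,
            Nat.mod_eq_of_lt (by omega : i - 2 * m < m)]
        omega
  set c := k + (2 * m + q - 1) with hc
  -- the palindromic-suffix symmetry, expressed on `f`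
  have hwin : ∀ a b : ℕ, k ≤ a → k ≤ b → a + b = c → f a = f b := by
    intro a b ha hb hab
    have hL : (w.drop k).length = 2 * m + q - k := by simp [hwlen]
    have hak : a - k < (w.drop k).length := by omega
    have e1 : w[a]? = (w.drop k)[a - k]? := by
      rw [List.getElem?_drop]; congr 1; omega
    have e2 : (w.drop k)[a - k]? = (w.drop k)[(w.drop k).length - 1 - (a - k)]? := by
      conv_lhs => rw [← hP]
      rw [List.getElem?_reverse hak]
    have e3 : (w.drop k).length - 1 - (a - k) = b - k := by omega
    have e4 : (w.drop k)[b - k]? = w[b]? := by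
      rw [List.getElem?_drop]; congr 1; omega
    have hb2m : b < 2 * m + q := by omega
    have ha2m : a < 2 * m + q := by omega
    rw [← hwget a ha2m, ← hwget b hb2m, e1, e2, e3, e4]
  -- symmetry centered anywhere congruent to c
  have hC : ∀ a b : ℕ, ((a : ZMod m) + b + 1 = (k : ZMod m) + q) → f a = f b := by
    intro a b h
    obtain ⟨a', ha1, ha2, ha3⟩ := exists_window_rep m k a hm0
    have ha'c : a' ≤ c := by omega
    have hkb' : k ≤ c - a' := by omega
    have h1 : f a' = f (c - a') := hwin a' (c - a') ha1 hkb' (by omega)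
    have hcast : ((c - a' : ℕ) : ZMod m) = (b : ZMod m) := by
      have e1 : (c - a') + a' = c := by omega
      have e2 : c + 1 = k + (2 * m + q) := by omega
      have e3 : ((c - a' : ℕ) : ZMod m) + (a' : ZMod m) = (c : ZMod m) := by
        exact_mod_cast congrArg (fun t : ℕ => (t : ZMod m)) e1
      have e4 : (c : ZMod m) + 1 = (k : ZMod m) + (2 * (m : ZMod m) + q) := by
        exact_mod_cast congrArg (fun t : ℕ => (t : ZMod m)) e2
      have hmz : (m : ZMod m) = 0 := ZMod.natCast_self m
      rw [hmz] at e4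
      have : ((c - a' : ℕ) : ZMod m) = (c : ZMod m) - (a : ZMod m) := by
        rw [← ha3]; linear_combination e3
      rw [this]
      linear_combination e4 - h
    exact (hcong a a' ha3.symm).trans (h1.trans (hcong _ b hcast))
  -- palindromicity of y on `f`
  have hD : ∀ a b : ℕ, ((a : ZMod m) + b + 1 = 0) → f a = f b := by
    intro a b h
    have him : a % m < m := Nat.mod_lt a hm0
    have e1 : f a = y[a % m]? := hfval a
    have e2 : y[a % m]? = y[m - 1 - a % m]? := by
      conv_lhs => rw [← hypal]
      rw [List.getElem?_reverse (by omega : a % m < y.length)]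
    have e3 : f (m - 1 - a % m) = y[m - 1 - a % m]? := by
      rw [hfval, Nat.mod_eq_of_lt (by omega)]
    have e4 : ((m - 1 - a % m : ℕ) : ZMod m) = (b : ZMod m) := by
      have s1 : (m - 1 - a % m) + (a % m + 1) = m := by omega
      have s2 : ((m - 1 - a % m : ℕ) : ZMod m) + ((a % m : ℕ) : ZMod m) + 1 = (m : ZMod m) := by
        exact_mod_cast congrArg (fun t : ℕ => (t : ZMod m)) s1
      rw [hmodcast, ZMod.natCast_self] at s2
      linear_combination s2 - h
    rw [e1, e2, ← e3]
    exact hcong _ _ e4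
  -- shift invariance by k + q
  have hE : ∀ n : ℕ, f (n + (k + q)) = f n := by
    intro n
    have h1 : f n = f (m - 1 - n % m) := by
      refine hD n (m - 1 - n % m) ?_
      have him : n % m < m := Nat.mod_lt n hm0
      have s1 : (n % m) + (m - 1 - n % m) + 1 = m := by omega
      have s2 : ((n % m : ℕ) : ZMod m) + ((m - 1 - n % m : ℕ) : ZMod m) + 1 = (m : ZMod m) := by
        exact_mod_cast congrArg (fun t : ℕ => (t : ZMod m)) s1
      rw [hmodcast, ZMod.natCast_self] at s2
      linear_combination s2
    have h2 : f (m - 1 - n % m) = f (n + (k + q)) := by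
      refine hC (m - 1 - n % m) (n + (k + q)) ?_
      have him : n % m < m := Nat.mod_lt n hm0
      have s1 : (n % m) + (m - 1 - n % m) + 1 = m := by omega
      have s2 : ((n % m : ℕ) : ZMod m) + ((m - 1 - n % m : ℕ) : ZMod m) + 1 = (m : ZMod m) := by
        exact_mod_cast congrArg (fun t : ℕ => (t : ZMod m)) s1
      rw [hmodcast, ZMod.natCast_self] at s2
      push_cast
      linear_combination s2
    rw [h1, h2]
  have hM : ∀ n : ℕ, f (n + m) = f n := by
    intro n
    refine hcong _ _ ?_
    push_cast [ZMod.natCast_self]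
    ring
  -- gcd period
  set g := Nat.gcd (k + q) m with hg
  have hper : ∀ n, f (n + g) = f n := periodic_gcd f (k + q) m hE hM
  have hg0 : 0 < g := Nat.gcd_pos_of_pos_left m (by omega)
  have hgdvd : g ∣ m := Nat.gcd_dvd_right _ _
  have hglt : g < m := lt_of_le_of_lt (Nat.gcd_le_left m (by omega)) (by omega)
  have hfmod : ∀ n : ℕ, f n = f (n % g) := by
    intro n
    conv_lhs => rw [← Nat.mod_add_div n g]
    exact periodic_mul f g hper (n / g) (n % g)
  set t := m / g with htdef
  have htg : t * g = m := Nat.div_mul_cancel hgdvd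
  have ht1 : 1 < t := by
    rcases Nat.lt_or_ge t 2 with h | h
    · interval_cases t <;> omega
    · omega
  have hvlen : (y.take g).length = g := by
    rw [List.length_take]; omega
  refine hyprim (y.take g) t ht1 ?_
  refine List.ext_getElem? ?_
  intro i
  rcases lt_or_ge i m with hi | hi
  · rw [getElem?_flatten_replicate (y.take g) t i (by rw [hvlen]; omega), hvlen,
      List.getElem?_take, if_pos (Nat.mod_lt i hg0)]
    have e1 : y[i]? = f i := by rw [hfval, Nat.mod_eq_of_lt hi]
    have e2 : f (i % g) = y[i % g]? := by
      rw [hfval, Nat.mod_eq_of_lt (lt_trans (Nat.mod_lt i hg0) hglt)]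
    rw [e1, hfmod i, e2]
  · rw [List.getElem?_eq_none (by omega : y.length ≤ i), List.getElem?_eq_none]
    have : (List.replicate t (y.take g)).flatten.length = t * g := by
      simp [hvlen]
    omega

private lemma palClosure_eq (w : List A) (K : ℕ)
    (h1 : (w.drop K).reverse = w.drop K)
    (h2 : ∀ j, j < K → ¬ ((w.drop j).reverse = w.drop j)) :
    palClosure w = w ++ (w.take K).reverse := by
  unfold palClosure
  letI : DecidablePred fun k => (w.drop k).reverse = w.drop k :=
    fun _ => Classical.propDecidable _
  have hfind : Nat.find (⟨w.length, by simp⟩ :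
      ∃ k, (w.drop k).reverse = w.drop k) = K := by
    rw [Nat.find_eq_iff]
    exact ⟨h1, h2⟩
  rw [hfind]

private lemma palClosure_pal {w : List A} (h : w.reverse = w) : palClosure w = w := by
  have := palClosure_eq w 0 (by simpa using h) (by intro j hj; omega)
  simpa using this

end AuxPalin

private lemma keyClosure {A : Type*} {x y : List A} (hpre : x <+: y) (hxpal : x.reverse = x)
    (hypal : y.reverse = y) (hx0 : x ≠ []) (hne : x ≠ y) (hyprim : Primitive y) :
    palClosure (y ++ y ++ x) = y ++ y ++ y := by
  have hlt : x.length < y.length :=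
    lt_of_le_of_ne hpre.length_le (fun h => hne (hpre.eq_of_length h))
  have hsuf : x <:+ y := by
    refine List.reverse_prefix.mp ?_
    rw [hxpal, hypal]; exact hpre
  obtain ⟨s, hs⟩ := hsuf
  have hslen : s.length = y.length - x.length := by
    have := congrArg List.length hs
    simp only [List.length_append] at this
    omega
  have hdrop : (y ++ y ++ x).drop (y.length - x.length) = x ++ y ++ x := by
    rw [List.append_assoc, List.drop_append]
    have h2 : y.drop (y.length - x.length) = x := by
      rw [← hslen, ← hs, List.drop_left]
    have h3 : (y.length - x.length) - y.length = 0 := by omega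
    rw [h2, h3, List.drop_zero, List.append_assoc]
  have hpaldrop : ((y ++ y ++ x).drop (y.length - x.length)).reverse
      = (y ++ y ++ x).drop (y.length - x.length) := by
    rw [hdrop]
    simp [List.reverse_append, hxpal, hypal, List.append_assoc]
  have hmin := corePalin hpre hypal hx0 hlt hyprim
  have hcl := palClosure_eq (y ++ y ++ x) (y.length - x.length) hpaldrop hmin
  rw [hcl]
  have htk : (y ++ y ++ x).take (y.length - x.length) = s := by
    rw [List.append_assoc, List.take_append]
    have h2 : y.take (y.length - x.length) = s := by
      rw [← hslen, ← hs, List.take_left]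
    have h3 : (y.length - x.length) - y.length = 0 := by omega
    rw [h2, h3, List.take_zero, List.append_nil]
  rw [htk]
  have hxs : x ++ s.reverse = y :=
    calc x ++ s.reverse = (s ++ x).reverse := by rw [List.reverse_append, hxpal]
    _ = y.reverse := by rw [hs]
    _ = y := hypal
  rw [List.append_assoc (y ++ y) x s.reverse, hxs]

/-- If `X ⊆ PAL ∩ PRIM` is a code and `ψ_X` is injective,
then `X` is a prefix code. -/
theorem stmt2 {A : Type*} [Fintype A] (X : Set (List A)) (hX : IsCode X)
    (hpal : ∀ x ∈ X, x.reverse = x) (hprim : ∀ x ∈ X, Primitive x)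
    (hinj : ∀ l l' : List (List A), (∀ w ∈ l, w ∈ X) → (∀ w ∈ l', w ∈ X) →
      psiList l = psiList l' → l = l') :
    IsPrefixCode X := by
  refine ⟨hX.1, ?_⟩
  intro x hx y hy hxy
  by_contra hne
  have hxpal := hpal x hx
  have hypal := hpal y hy
  have hx0 := hX.1 x hx
  have key := keyClosure hxy hxpal hypal hx0 hne (hprim y hy)
  have hyy : (y ++ y).reverse = y ++ y := by
    simp [List.reverse_append, hypal]
  have hyyy : (y ++ y ++ y).reverse = y ++ y ++ y := by
    simp [List.reverse_append, hypal, List.append_assoc]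
  have p1 : psiList [y, y, x] = y ++ y ++ y := by
    simp only [psiList, List.foldl_cons, List.foldl_nil, List.nil_append]
    rw [palClosure_pal hypal, palClosure_pal hyy, key]
  have p2 : psiList [y, y, y] = y ++ y ++ y := by
    simp only [psiList, List.foldl_cons, List.foldl_nil, List.nil_append]
    rw [palClosure_pal hypal, palClosure_pal hyy, palClosure_pal hyyy]
  have heq := hinj [y, y, x] [y, y, y]
    (by intro w hw; simp only [List.mem_cons, List.not_mem_nil, or_false] at hw
        rcases hw with rfl | rfl | rfl <;> assumption)
    (by intro w hw; simp only [List.mem_cons, List.not_mem_nil, or_false] at hw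
        rcases hw with rfl | rfl | rfl <;> assumption)
    (p1.trans p2.symm)
  simp only [List.cons.injEq, and_true] at heq
  exact hne heq.2.2
end

section
/- If X is a prefix code over a finite alphabet A, then the extended palindromization map ψ_X : X^ω → A^ω is injective: if (xᵢ)ᵢ≥1 and (x'ᵢ)ᵢ≥1 are sequences of elements of X with ψ_X(x₁x₂⋯) = ψ_X(x'₁x'₂⋯), then xᵢ = x'ᵢ for all i ≥ 1. -/
open List

/-
By induction on `n`, the first `n` factors agree. Given that, both `ψ_X(x₁⋯xₙxₙ₊₁)` and
`ψ_X(x₁⋯xₙx'ₙ₊₁)` are prefixes of `s`, and they begin with `p xₙ₊₁` and `p x'ₙ₊₁` for the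
common palindrome `p = ψ_X(x₁⋯xₙ)`. Two prefixes of one infinite word are comparable, so one of
`xₙ₊₁`, `x'ₙ₊₁` is a prefix of the other, and they are equal since `X` is a prefix code.
-/

section PrefixOfInf

variable {A : Type*} {u v : List A} {s : ℕ → A}

lemma PrefixOfInf.of_prefix (huv : u <+: v) (hv : PrefixOfInf v s) : PrefixOfInf u s := by
  obtain ⟨r, rfl⟩ := huv
  intro i hi
  simpa [List.getElem_append_left hi] using hv i (by simp; omega)

lemma PrefixOfInf.prefix_of_length_le (hu : PrefixOfInf u s) (hv : PrefixOfInf v s)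
    (hlen : u.length ≤ v.length) : u <+: v := by
  rw [List.prefix_iff_eq_take]
  refine List.ext_getElem (by simpa using hlen) fun i hi _ => ?_
  simpa [← hu i hi] using (hv i (hi.trans_le hlen)).symm

lemma PrefixOfInf.prefix_or_prefix (hu : PrefixOfInf u s) (hv : PrefixOfInf v s) :
    u <+: v ∨ v <+: u :=
  (le_total u.length v.length).imp (hu.prefix_of_length_le hv) (hv.prefix_of_length_le hu)

end PrefixOfInf

lemma IsPrefixCode.eq_of_prefixOfInf {A : Type*} {X : Set (List A)} (hX : IsPrefixCode X)
    {x y : List A} (hx : x ∈ X) (hy : y ∈ X) {p : List A} {s : ℕ → A}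
    (hpx : PrefixOfInf (p ++ x) s) (hpy : PrefixOfInf (p ++ y) s) : x = y := by
  rcases hpx.prefix_or_prefix hpy with h | h
  · exact hX.2 x hx y hy (List.prefix_append_right_inj p |>.mp h)
  · exact (hX.2 y hy x hx (List.prefix_append_right_inj p |>.mp h)).symm

lemma psiList_ofFn_succ {A : Type*} (t : ℕ → List A) (n : ℕ) :
    psiList (List.ofFn fun i : Fin (n + 1) => t i.1)
      = palClosure (psiList (List.ofFn fun i : Fin n => t i.1) ++ t n) := by
  rw [List.ofFn_succ', List.concat_eq_append, psiList, List.foldl_append]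
  simp [psiList]

lemma prefix_psiList_ofFn_succ {A : Type*} (t : ℕ → List A) (n : ℕ) :
    psiList (List.ofFn fun i : Fin n => t i.1) ++ t n
      <+: psiList (List.ofFn fun i : Fin (n + 1) => t i.1) := by
  rw [psiList_ofFn_succ]
  exact ⟨_, rfl⟩

theorem stmt3_general {A : Type*} (X : Set (List A)) (hX : IsPrefixCode X)
    (t t' : ℕ → List A) (ht : ∀ i, t i ∈ X) (ht' : ∀ i, t' i ∈ X)
    (s : ℕ → A)
    (hs : ∀ n : ℕ, PrefixOfInf (psiList (List.ofFn fun i : Fin n => t i.1)) s)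
    (hs' : ∀ n : ℕ, PrefixOfInf (psiList (List.ofFn fun i : Fin n => t' i.1)) s) :
    t = t' := by
  have hinit : ∀ n, (List.ofFn fun i : Fin n => t i.1) = List.ofFn fun i : Fin n => t' i.1 := by
    intro n
    induction n with
    | zero => rfl
    | succ n ih =>
      have hstep : t n = t' n := by
        refine hX.eq_of_prefixOfInf (ht n) (ht' n)
          ((hs (n + 1)).of_prefix (prefix_psiList_ofFn_succ t n)) ?_
        rw [ih]
        exact (hs' (n + 1)).of_prefix (prefix_psiList_ofFn_succ t' n)
      simp only [List.ofFn_succ', Fin.val_castSucc, Fin.val_last, ih, hstep]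
  funext n
  simpa using congrFun (List.ofFn_inj.mp (hinit (n + 1))) (Fin.last n)

/-- If `X` is a prefix code, the extension of `ψ_X` to `X^ω` is
injective: if `ψ_X(x₁x₂⋯) = ψ_X(x'₁x'₂⋯) = s` then `xᵢ = x'ᵢ` for all `i`. -/
theorem stmt3 {A : Type*} [Fintype A] (X : Set (List A)) (hX : IsPrefixCode X)
    (t t' : ℕ → List A) (ht : ∀ i, t i ∈ X) (ht' : ∀ i, t' i ∈ X)
    (s : ℕ → A)
    (hs : ∀ n : ℕ, PrefixOfInf (psiList (List.ofFn fun i : Fin n => t i.1)) s)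
    (hs' : ∀ n : ℕ, PrefixOfInf (psiList (List.ofFn fun i : Fin n => t' i.1)) s) :
    t = t' :=
  stmt3_general X hX t t' ht ht' s hs hs'
end

section
/- Let X be a finite code over A having finite deciphering delay, and let t ∈ X^ω. Then the infinite word s = ψ_X(t) is uniformly recurrent, i.e., for every factor w of s there exists an integer N such that w occurs in every factor of s of length N. -/
open List

/-- Basic properties of the right palindromic closure: it is a palindrome,
contains `w` as a prefix (in particular is at least as long), and has length
at most `2 |w|`. -/
theorem palClosure_spec' {A : Type*} (w : List A) :
    (palClosure w).reverse = palClosure w ∧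
    w.length ≤ (palClosure w).length ∧ (palClosure w).length ≤ 2 * w.length := by
  letI : DecidablePred fun k => (w.drop k).reverse = w.drop k :=
    fun _ => Classical.propDecidable _
  unfold palClosure
  have hspec : (w.drop (Nat.find (⟨w.length, by simp⟩ :
      ∃ k, (w.drop k).reverse = w.drop k))).reverse
      = w.drop (Nat.find (⟨w.length, by simp⟩ :
      ∃ k, (w.drop k).reverse = w.drop k)) :=
    Nat.find_spec (⟨w.length, by simp⟩ : ∃ k, (w.drop k).reverse = w.drop k)
  have hk : (Nat.find (⟨w.length, by simp⟩ :
      ∃ k, (w.drop k).reverse = w.drop k)) ≤ w.length := Nat.find_le (by simp)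
  set k := Nat.find (⟨w.length, by simp⟩ : ∃ k, (w.drop k).reverse = w.drop k)
    with hkdef
  refine ⟨?_, ?_, ?_⟩
  · rw [List.reverse_append, List.reverse_reverse]
    conv_lhs => rw [show w.reverse = w.drop k ++ (w.take k).reverse by
      rw [← hspec, ← List.reverse_append, List.take_append_drop]]
    conv_rhs => rw [show w = w.take k ++ w.drop k from (List.take_append_drop k w).symm]
    rw [← List.append_assoc, List.take_append_drop]
  · simp
  · simp only [List.length_append, List.length_reverse, List.length_take]
    omega

/-- One step of the generalized palindromization map. -/
theorem psiList_step {A : Type*} (t : ℕ → List A) (m : ℕ) :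
    psiList (List.ofFn fun i : Fin (m+1) => t i.1)
      = palClosure (psiList (List.ofFn fun i : Fin m => t i.1) ++ t m) := by
  have h1 : (List.ofFn fun i : Fin (m+1) => t i.1)
      = (List.ofFn fun i : Fin m => t i.1) ++ [t m] := by
    rw [List.ofFn_succ']
    simp [List.concat_eq_append]
  rw [h1]
  unfold psiList
  rw [List.foldl_append]
  rfl

/-- An infinite word having arbitrarily long palindromic prefixes whose lengths
do not grow too fast (at most doubling plus a constant) is uniformly
recurrent. -/
theorem uniformlyRecurrent_of_palindromic_prefixes {A : Type*} (s : ℕ → A)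
    (P : ℕ → List A) (M : ℕ)
    (hpal : ∀ m, (P m).reverse = P m)
    (hpref : ∀ m, ∀ j, (h : j < (P m).length) → (P m).get ⟨j, h⟩ = s j)
    (hmono : ∀ m, (P m).length < (P (m+1)).length)
    (hgrow : ∀ m, (P (m+1)).length ≤ 2 * (P m).length + 2 * M) :
    UniformlyRecurrent s := by
  have hLmono : ∀ m m', m ≤ m' → (P m).length ≤ (P m').length := by
    intro m m' h
    induction m', h using Nat.le_induction with
    | base => exact le_rfl
    | succ m' h IH => exact IH.trans (hmono m').le
  have hLinf : ∀ B n0 : ℕ, ∃ m, n0 ≤ m ∧ B ≤ (P m).length := by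
    intro B n0
    have key : ∀ j : ℕ, (P n0).length + j ≤ (P (n0 + j)).length := by
      intro j
      induction j with
      | zero => simp
      | succ j IH =>
        show (P n0).length + (j + 1) ≤ (P (n0 + j + 1)).length
        have := hmono (n0 + j)
        omega
    exact ⟨n0 + B, by omega, by have := key B; omega⟩
  -- mirror symmetry of s inside each P m
  have sM : ∀ m j, j < (P m).length → s j = s ((P m).length - 1 - j) := by
    intro m j h
    have h2 : (P m).length - 1 - j < (P m).length := by omega
    have e1 := hpref m j h
    have e2 := hpref m ((P m).length - 1 - j) h2
    simp only [List.get_eq_getElem] at e1 e2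
    rw [← e1, ← e2]
    have hj' : j < (P m).reverse.length := by simpa using h
    rw [← List.getElem_of_eq (hpal m) hj']
    simp only [List.getElem_reverse]
  intro w hw
  obtain ⟨i₀, hw⟩ := hw
  obtain ⟨n, -, hn⟩ := hLinf (i₀ + w.length) 0
  set q := (P n).length with hq
  set D := q + 2 * M with hD
  set Occ : ℕ → Prop := fun p => ∀ j, j < q → s (p + j) = s j with hOccDef
  have occ0 : Occ 0 := fun j _ => by simp
  have oMirror : ∀ m p, n ≤ m → p + q ≤ (P m).length → Occ p →
      Occ ((P m).length - q - p) := by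
    intro m p hnm hpq ho j hj
    have hqm : q ≤ (P m).length := hLmono n m hnm
    have e1 : s ((P m).length - q - p + j)
        = s ((P m).length - 1 - ((P m).length - q - p + j)) :=
      sM m _ (by omega)
    have e2 : (P m).length - 1 - ((P m).length - q - p + j) = p + (q - 1 - j) := by
      omega
    have e3 : s (p + (q - 1 - j)) = s (q - 1 - j) := ho _ (by omega)
    have e4 : s j = s (q - 1 - j) := by
      rw [hq]; exact sM n j (by omega)
    rw [e1, e2, e3]; exact e4.symm
  have Lclaim : ∀ m, n ≤ m → ∀ i, i + q ≤ (P m).length →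
      ∃ p, p ≤ i ∧ i ≤ p + D ∧ p + q ≤ (P m).length ∧ Occ p := by
    intro m hm
    induction m, hm using Nat.le_induction with
    | base => intro i hi; exact ⟨0, by omega, by omega, by omega, occ0⟩
    | succ m hm IH =>
      have hqm : q ≤ (P m).length := hLmono n m hm
      have Rm : ∀ i', i' + q ≤ (P m).length →
          ∃ p, i' ≤ p ∧ p ≤ i' + D ∧ p + q ≤ (P m).length ∧ Occ p := by
        intro i' hi'
        obtain ⟨p', a, b, c, d⟩ := IH ((P m).length - q - i') (by omega)
        exact ⟨(P m).length - q - p', by omega, by omega, by omega,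
          oMirror m p' hm c d⟩
      intro i hi
      have hg := hgrow m
      have hmo := hmono m
      by_cases h1 : i + q ≤ (P m).length
      · obtain ⟨p, a, b, c, d⟩ := IH i h1
        exact ⟨p, a, b, by omega, d⟩
      · by_cases h2 : i ≤ (P m).length - q + D
        · refine ⟨(P m).length - q, by omega, by omega, by omega, ?_⟩
          simpa using oMirror m 0 hm (by omega) occ0
        · obtain ⟨p', a, b, c, d⟩ := Rm ((P (m+1)).length - q - i) (by omega)
          exact ⟨(P (m+1)).length - q - p', by omega, by omega, by omega,
            oMirror (m+1) p' (by omega) (by omega) d⟩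
  have Rglobal : ∀ i, ∃ p, i ≤ p ∧ p ≤ i + D ∧ Occ p := by
    intro i
    obtain ⟨m, hm, hB⟩ := hLinf (i + q) n
    have hqm : q ≤ (P m).length := hLmono n m hm
    obtain ⟨p', a, b, c, d⟩ := Lclaim m hm ((P m).length - q - i) (by omega)
    exact ⟨(P m).length - q - p', by omega, by omega, oMirror m p' hm c d⟩
  refine ⟨D + q, fun i => ?_⟩
  obtain ⟨p, hip, hpD, hOcc⟩ := Rglobal i
  set W : List A := List.ofFn (fun k : Fin (D + q) => s (i + k.1)) with hW
  have hWlen : W.length = D + q := by simp [hW]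
  set d := p + i₀ - i with hd
  have hdw : d + w.length ≤ D + q := by omega
  have hkey : w = (W.drop d).take w.length := by
    apply List.ext_getElem
    · simp [hWlen]; omega
    · intro k hk1 hk2
      have hdk : d + k < W.length := by omega
      rw [List.getElem_take, List.getElem_drop]
      have hWe : W[d + k]'hdk = s (i + (d + k)) := by simp [hW]
      rw [hWe]
      have hwe : w[k]'hk1 = s (i₀ + k) := by
        rw [List.getElem_of_eq hw hk1]
        simp
      rw [hwe]
      have he : i + (d + k) = p + (i₀ + k) := by omega
      rw [he, hOcc (i₀ + k) (by omega)]
  rw [hkey]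
  exact (List.take_prefix _ _).isInfix.trans (List.drop_suffix _ _).isInfix

/-- For a finite code `X` with finite deciphering delay and
`t ∈ X^ω`, the word `s = ψ_X(t)` is uniformly recurrent. -/
theorem stmt4 {A : Type*} [Fintype A] (X : Set (List A)) (hX : IsCode X)
    (hfin : X.Finite) (hdd : FiniteDecipheringDelay X)
    (t : ℕ → List A) (ht : ∀ i, t i ∈ X)
    (s : ℕ → A)
    (hs : ∀ n : ℕ, PrefixOfInf (psiList (List.ofFn fun i : Fin n => t i.1)) s) :
    UniformlyRecurrent s := by
    classical
  obtain ⟨M, hM⟩ : ∃ M : ℕ, ∀ x ∈ X, x.length ≤ M := by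
    obtain ⟨M, hM⟩ := (hfin.image List.length).bddAbove
    exact ⟨M, fun x hx => hM (Set.mem_image_of_mem _ hx)⟩
  refine uniformlyRecurrent_of_palindromic_prefixes s
    (fun n => psiList (List.ofFn fun i : Fin n => t i.1)) M ?_ ?_ ?_ ?_
  · intro m
    cases m with
    | zero => simp [psiList]
    | succ m =>
      show (psiList (List.ofFn fun i : Fin (m+1) => t i.1)).reverse
        = psiList (List.ofFn fun i : Fin (m+1) => t i.1)
      rw [psiList_step]
      exact (palClosure_spec' _).1
  · exact fun m => hs m
  · intro m
    show (psiList (List.ofFn fun i : Fin m => t i.1)).length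
      < (psiList (List.ofFn fun i : Fin (m+1) => t i.1)).length
    rw [psiList_step]
    have h1 := (palClosure_spec'
      (psiList (List.ofFn fun i : Fin m => t i.1) ++ t m)).2.1
    have h2 : 0 < (t m).length := List.length_pos_iff.2 (hX.1 _ (ht m))
    simp only [List.length_append] at h1
    omega
  · intro m
    show (psiList (List.ofFn fun i : Fin (m+1) => t i.1)).length
      ≤ 2 * (psiList (List.ofFn fun i : Fin m => t i.1)).length + 2 * M
    rw [psiList_step]
    have h1 := (palClosure_spec'
      (psiList (List.ofFn fun i : Fin m => t i.1) ++ t m)).2.2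
    have h3 := hM _ (ht m)
    simp only [List.length_append] at h1
    omega
end

section
/- Let s = ψ_X(y) be an X-AR word, with y = y₁y₂⋯yₙ⋯, yᵢ ∈ X. Then for every n ≥ 0, the word uₙ = ψ_X(y₁⋯yₙ) is a bispecial factor of s of order d = card(A). Consequently, every prefix of s is a left special factor of s of order d. -/
open List

section Aux

variable {A : Type*}

lemma pal_aux (w : List A) (k : ℕ) (h : (w.drop k).reverse = w.drop k) :
    (w ++ (w.take k).reverse).reverse = w ++ (w.take k).reverse := by
  have h2 : w.reverse = w.drop k ++ (w.take k).reverse := by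
    conv_lhs => rw [← take_append_drop k w]
    rw [reverse_append, h]
  rw [reverse_append, reverse_reverse, h2, ← append_assoc, take_append_drop]

lemma palClosure_prefix (w : List A) : w <+: palClosure w := by
  unfold palClosure; exact prefix_append _ _

lemma palClosure_palindrome (w : List A) :
    (palClosure w).reverse = palClosure w := by
  letI : DecidablePred fun k => (w.drop k).reverse = w.drop k :=
    fun _ => Classical.propDecidable _
  unfold palClosure
  exact pal_aux w _ (Nat.find_spec (⟨w.length, by simp⟩ :
    ∃ k, (w.drop k).reverse = w.drop k))

lemma psiList_concat (l : List (List A)) (x : List A) :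
    psiList (l ++ [x]) = palClosure (psiList l ++ x) := by
  simp [psiList, List.foldl_append]

end Aux

/-- For an `X`-AR word `s = ψ_X(y₁y₂⋯)`, each
`uₙ = ψ_X(y₁⋯yₙ)` is a bispecial factor of `s` of order `d = card A`, and every
prefix of `s` is a left special factor of `s` of order `d`. -/
theorem stmt8 {A : Type*} [Fintype A] (hd : 1 < Fintype.card A)
    (X : Set (List A)) (hfin : X.Finite) (hX : IsMaximalPrefixCode X)
    (y : ℕ → List A) (hy : ∀ i, y i ∈ X)
    (hpers : ∀ x ∈ X, ∀ N : ℕ, ∃ i ≥ N, y i = x)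
    (s : ℕ → A)
    (hs : ∀ n : ℕ, PrefixOfInf (psiList (List.ofFn fun i : Fin n => y i.1)) s) :
    (∀ n : ℕ,
      FactorOfInf (psiList (List.ofFn fun i : Fin n => y i.1)) s ∧
      {c : A | FactorOfInf ((psiList (List.ofFn fun i : Fin n => y i.1)) ++ [c]) s}.ncard
        = Fintype.card A ∧
      {c : A | FactorOfInf ([c] ++ psiList (List.ofFn fun i : Fin n => y i.1)) s}.ncard
        = Fintype.card A) ∧
    (∀ n : ℕ,
      {c : A | FactorOfInf ([c] ++ List.ofFn fun i : Fin n => s i.1) s}.ncard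
        = Fintype.card A) := by
  classical
  set u : ℕ → List A := fun n => psiList (List.ofFn fun i : Fin n => y i.1) with hu
  have hsucc : ∀ n, u (n + 1) = palClosure (u n ++ y n) := by
    intro n
    have : (List.ofFn fun i : Fin (n + 1) => y i.1)
        = (List.ofFn fun i : Fin n => y i.1) ++ [y n] := by
      rw [List.ofFn_succ']
      simp [List.concat_eq_append, Fin.last]
    simp only [hu, this, psiList_concat]
  have hpal : ∀ n, (u n).reverse = u n := by
    intro n
    induction n with
    | zero => simp [hu, psiList]
    | succ n ih => rw [hsucc]; exact palClosure_palindrome _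
  have hpref : ∀ n, u n <+: u (n + 1) := by
    intro n
    rw [hsucc]
    exact (prefix_append _ _).trans (palClosure_prefix _)
  have hprefmono : ∀ {n m : ℕ}, n ≤ m → u n <+: u m := by
    intro n m h
    induction h with
    | refl => exact prefix_rfl
    | step h ih => exact ih.trans (hpref _)
  have hlen : ∀ n, n ≤ (u n).length := by
    intro n
    induction n with
    | zero => exact Nat.zero_le _
    | succ n ih =>
      have h1 := (palClosure_prefix (u n ++ y n)).length_le
      rw [length_append] at h1
      have h2 : 1 ≤ (y n).length :=
        List.length_pos_iff.mpr (hX.1.1 (y n) (hy n))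
      rw [hsucc]
      omega
  -- every factor of some `u m` is a factor of `s`
  have infix_factor : ∀ {w : List A} {m : ℕ}, w <:+: u m → FactorOfInf w s := by
    intro w m hwm
    obtain ⟨l, r, hlr⟩ := hwm
    refine ⟨l.length, ?_⟩
    apply List.ext_get (by simp)
    intro i h1 h2
    have hiw : i < w.length := h1
    have hlt : l.length + i < (u m).length := by
      rw [← hlr]; simp only [length_append]; omega
    have hsm : (u m).get ⟨l.length + i, hlt⟩ = s (l.length + i) :=
      hs m (l.length + i) hlt
    have hget : (u m).get ⟨l.length + i, hlt⟩ = w.get ⟨i, hiw⟩ := by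
      simp only [← hlr, List.get_eq_getElem]
      simp only [List.append_assoc]
      have hh1 : (l ++ (w ++ r))[l.length + i]'(by simp; omega)
          = (w ++ r)[l.length + i - l.length]'(by simp; omega) :=
        List.getElem_append_right (by omega)
      have hh2 : (w ++ r)[l.length + i - l.length]'(by simp; omega) = w[i] := by
        have heq : l.length + i - l.length = i := by omega
        simp only [heq]
        exact List.getElem_append_left hiw
      rw [hh1, hh2]
    have hofn : (List.ofFn fun k : Fin w.length => s (l.length + k.1)).get ⟨i, h2⟩
        = s (l.length + i) := by simp
    rw [hofn, ← hsm, hget]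
  -- every letter starts some element of X
  have hcover : ∀ a : A, ∃ x ∈ X, ∃ t, x = a :: t := by
    intro a
    by_contra hcon
    push_neg at hcon
    have hnp : ∀ x ∈ X, ¬([a] <+: x) := by
      intro x hx hp
      obtain ⟨t, ht⟩ := hp
      exact hcon x hx t ht.symm
    have hY : IsPrefixCode (X ∪ {[a]}) := by
      constructor
      · rintro x (hx | rfl)
        · exact hX.1.1 x hx
        · simp
      · rintro x (hx | rfl) z (hz | rfl) hp
        · exact hX.1.2 x hx z hz hp
        · have h1 : 1 ≤ x.length := List.length_pos_iff.mpr (hX.1.1 x hx)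
          have h2 : x.length ≤ 1 := by simpa using hp.length_le
          exact hp.eq_of_length (by simp; omega)
        · exact absurd hp (hnp z hz)
        · rfl
    have hXY := hX.2 _ hY Set.subset_union_left
    have haX : [a] ∈ X := by
      rw [hXY]; exact Set.mem_union_right _ rfl
    exact hnp _ haX prefix_rfl
  -- key combinatorial fact
  have keyfac : ∀ (n : ℕ) (a : A), ∃ m, (u n ++ [a]) <:+: u m := by
    intro n a
    obtain ⟨x, hxX, t, hxt⟩ := hcover a
    obtain ⟨m, hm, hym⟩ := hpers x hxX n
    have hsuf : u n <:+ u m := by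
      have h := (hprefmono hm).reverse
      rwa [hpal n, hpal m] at h
    obtain ⟨l, hl⟩ := hsuf
    refine ⟨m + 1, ?_⟩
    have h1 : (u m ++ x) <+: u (m + 1) := by
      rw [hsucc, hym]; exact palClosure_prefix _
    have h2 : (u n ++ [a]) <:+: (u m ++ x) :=
      ⟨l, t, by rw [← hl, hxt]; simp⟩
    exact h2.trans h1.isInfix
  have keyfac' : ∀ (n : ℕ) (a : A), ∃ m, ([a] ++ u n) <:+: u m := by
    intro n a
    obtain ⟨m, hmf⟩ := keyfac n a
    refine ⟨m, ?_⟩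
    have h := List.reverse_infix.mpr hmf
    rwa [reverse_append, hpal n, hpal m, reverse_singleton] at h
  have ncard_univ : ∀ (S : Set A), (∀ a : A, a ∈ S) → S.ncard = Fintype.card A := by
    intro S hS
    rw [Set.eq_univ_of_forall hS, Set.ncard_univ, Nat.card_eq_fintype_card]
  constructor
  · intro n
    refine ⟨infix_factor (m := n) infix_rfl, ?_, ?_⟩
    · apply ncard_univ
      intro a
      obtain ⟨m, hmf⟩ := keyfac n a
      exact infix_factor hmf
    · apply ncard_univ
      intro a
      obtain ⟨m, hmf⟩ := keyfac' n a
      exact infix_factor hmf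
  · intro n
    have hpn : (List.ofFn fun i : Fin n => s i.1) <+: u n := by
      have heq : (u n).take n = List.ofFn fun i : Fin n => s i.1 := by
        apply List.ext_get (by simp [hlen n])
        intro i h1 h2
        have hi : i < n := by simpa using h2
        have hi' : i < (u n).length := lt_of_lt_of_le hi (hlen n)
        simp only [List.get_eq_getElem, List.getElem_take, List.getElem_ofFn]
        exact hs n i hi'
      rw [← heq]
      exact take_prefix _ _
    apply ncard_univ
    intro a
    obtain ⟨m, hmf⟩ := keyfac' n a
    obtain ⟨r, hr⟩ := hpn
    have hin : ([a] ++ List.ofFn fun i : Fin n => s i.1) <:+: ([a] ++ u n) :=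
      ⟨[], r, by simp [← hr]⟩
    exact infix_factor (hin.trans hmf)
end

section
/- Let s be an X-AR word over an alphabet of d letters. Then there exist an integer ν and an integer c ∈ ℤ such that the factor complexity of s satisfies p_s(n) ≥ (card(X) − 1)·n + c for all n ≥ ν. -/
open List

namespace Stmt11Aux

variable {A : Type*}

lemma palClosure_spec (w : List A) :
    ∃ k, palClosure w = w ++ (w.take k).reverse ∧ (w.drop k).reverse = w.drop k := by
  letI : DecidablePred fun k => (w.drop k).reverse = w.drop k :=
    fun _ => Classical.propDecidable _
  have E : ∃ k, (w.drop k).reverse = w.drop k := ⟨w.length, by simp⟩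
  refine ⟨Nat.find E, ?_, Nat.find_spec E⟩
  rfl

lemma prefix_palClosure (w : List A) : w <+: palClosure w := by
  obtain ⟨k, hk, -⟩ := palClosure_spec w
  rw [hk]; exact prefix_append _ _

lemma palClosure_reverse (w : List A) : (palClosure w).reverse = palClosure w := by
  obtain ⟨k, hk, hp⟩ := palClosure_spec w
  have h := List.take_append_drop k w
  set a := w.take k with ha
  set b := w.drop k with hb
  rw [hk, ← h]
  simp [List.reverse_append, hp, List.append_assoc]

def win (s : ℕ → A) (i n : ℕ) : List A := List.ofFn fun k : Fin n => s (i + k.1)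

@[simp] lemma win_length (s : ℕ → A) (i n : ℕ) : (win s i n).length = n := by simp [win]

lemma win_getElem (s : ℕ → A) (i n t : ℕ) (h : t < (win s i n).length) :
    (win s i n)[t] = s (i + t) := by
  simp [win]

lemma factor_win (s : ℕ → A) (i n : ℕ) : FactorOfInf (win s i n) s := by
  refine ⟨i, ?_⟩
  apply List.ext_getElem (by simp)
  intro t h1 h2
  simp [win]

lemma factorOfInf_win {w : List A} {s : ℕ → A} (h : FactorOfInf w s) :
    ∃ i, w = win s i w.length := h

lemma factor_getElem {w : List A} {s : ℕ → A} (h : FactorOfInf w s) :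
    ∃ i, ∀ t (ht : t < w.length), w[t] = s (i + t) := by
  obtain ⟨i, hi⟩ := h
  refine ⟨i, fun t ht => ?_⟩
  rw [List.getElem_of_eq hi ht]
  simp

lemma factorOfInf_of_getElem {w : List A} {s : ℕ → A} {i : ℕ}
    (h : ∀ t (ht : t < w.length), w[t] = s (i + t)) : FactorOfInf w s := by
  refine ⟨i, ?_⟩
  apply List.ext_getElem (by simp)
  intro t h1 h2
  simp [h t h1]

lemma factor_infix {u w : List A} {s : ℕ → A}
    (h : u <:+: w) (hw : FactorOfInf w s) : FactorOfInf u s := by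
  obtain ⟨i, hget⟩ := factor_getElem hw
  obtain ⟨l, r, hl⟩ := h
  refine factorOfInf_of_getElem (i := i + l.length) (fun t ht => ?_)
  have h1 : l.length + t < w.length := by
    rw [← hl]; simp; omega
  have h2 : w[l.length + t]'h1 = u[t] := by
    rw [List.getElem_of_eq hl.symm h1,
        List.getElem_append_left (by simp; omega),
        List.getElem_append_right (by omega)]
    congr 1
    omega
  rw [← h2, hget _ h1]
  ring_nf

lemma prefixOfInf_eq_win {w : List A} {s : ℕ → A} (h : PrefixOfInf w s) :
    w = win s 0 w.length := by
  apply List.ext_getElem (by simp)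
  intro t h1 h2
  have := h t h1
  simp only [List.get_eq_getElem] at this
  simp [win, this]

lemma prefixOfInf_mono {u w : List A} {s : ℕ → A} (h : u <+: w) (hw : PrefixOfInf w s) :
    PrefixOfInf u s := by
  intro i hi
  obtain ⟨r, rfl⟩ := h
  have h2 : i < (u ++ r).length := by simp; omega
  have := hw i h2
  simp only [List.get_eq_getElem] at this ⊢
  rw [← this, List.getElem_append_left hi]

lemma factorOfInf_of_prefixOfInf {w : List A} {s : ℕ → A} (h : PrefixOfInf w s) :
    FactorOfInf w s := by
  rw [prefixOfInf_eq_win h]; exact factor_win s 0 _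

lemma psi_ofFn_succ (y : ℕ → List A) (m : ℕ) :
    psiList (List.ofFn fun i : Fin (m+1) => y i.1) =
      palClosure (psiList (List.ofFn fun i : Fin m => y i.1) ++ y m) := by
  have h : (List.ofFn fun i : Fin (m+1) => y i.1)
      = (List.ofFn fun i : Fin m => y i.1) ++ [y m] := by
    rw [List.ofFn_succ']
    simp [List.concat_eq_append]
  rw [h]
  simp [psiList, List.foldl_append]


section PsiFacts

variable {A : Type*}

noncomputable def PmW (y : ℕ → List A) (m : ℕ) : List A :=
  psiList (List.ofFn fun i : Fin m => y i.1)

lemma PmW_succ (y : ℕ → List A) (m : ℕ) :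
    PmW y (m+1) = palClosure (PmW y m ++ y m) := psi_ofFn_succ y m

lemma PmW_chain (y : ℕ → List A) (m : ℕ) : PmW y m ++ y m <+: PmW y (m+1) := by
  rw [PmW_succ]; exact prefix_palClosure _

lemma PmW_reverse (y : ℕ → List A) (m : ℕ) : (PmW y m).reverse = PmW y m := by
  cases m with
  | zero => simp [PmW, psiList]
  | succ m => rw [PmW_succ]; exact palClosure_reverse _

lemma PmW_len (y : ℕ → List A) (hylen : ∀ m, 1 ≤ (y m).length) (m : ℕ) :
    m ≤ (PmW y m).length := by
  induction m with
  | zero => simp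
  | succ m ih =>
    have h1 := (PmW_chain y m).length_le
    rw [List.length_append] at h1
    have := hylen m
    omega

lemma vW_getElem (s : ℕ → A) (n t : ℕ) (h : t < ((win s 0 n).reverse).length) :
    ((win s 0 n).reverse)[t] = s (n - 1 - t) := by
  have ht : t < n := by simpa using h
  rw [List.getElem_reverse]
  rw [win_getElem]
  simp

lemma factB {X : Set (List A)} {y : ℕ → List A} {s : ℕ → A}
    (hpers : ∀ x ∈ X, ∀ N : ℕ, ∃ i ≥ N, y i = x)
    (hylen : ∀ m, 1 ≤ (y m).length)
    (hs : ∀ m, PrefixOfInf (PmW y m) s)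
    (n : ℕ) (w : List A) (hw : ∃ x ∈ X, w <+: x) :
    FactorOfInf ((win s 0 n).reverse ++ w) s := by
  obtain ⟨x, hxX, hwx⟩ := hw
  obtain ⟨m', hm'n, hym'⟩ := hpers x hxX n
  set P := PmW y m' with hP
  have hPlen : n ≤ P.length := le_trans hm'n (PmW_len y hylen m')
  have hPwin : P = win s 0 P.length := prefixOfInf_eq_win (hs m')
  -- v n is a suffix of P
  have hsfx : (win s 0 n).reverse = P.drop (P.length - n) := by
    apply List.ext_getElem (by simp; omega)
    intro t h1 h2
    have htn : t < n := by simpa using h1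
    rw [vW_getElem s n t h1]
    rw [List.getElem_drop]
    have hidx : P.length - n + t < P.length := by omega
    symm
    calc P[P.length - n + t]'hidx
        = P.reverse[P.length - n + t]'(by simpa using hidx) := by
          rw [List.getElem_of_eq (PmW_reverse y m').symm hidx]
      _ = P[P.length - 1 - (P.length - n + t)]'(by omega) := List.getElem_reverse _
      _ = s (n - 1 - t) := by
          rw [List.getElem_of_eq hPwin (by omega), win_getElem]
          congr 1
          omega
  have h1 : (win s 0 n).reverse ++ w <:+ P ++ w := by
    refine ⟨P.take (P.length - n), ?_⟩
    rw [← List.append_assoc, hsfx, List.take_append_drop]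
  have h2 : P ++ w <+: P ++ x := by
    obtain ⟨r, hr⟩ := hwx
    exact ⟨r, by rw [List.append_assoc, hr]⟩
  have h3 : P ++ x <+: PmW y (m' + 1) := by
    rw [← hym']; exact PmW_chain y m'
  have h4 : FactorOfInf (PmW y (m' + 1)) s := factorOfInf_of_prefixOfInf (hs (m' + 1))
  exact factor_infix (h1.isInfix.trans (h2.isInfix.trans h3.isInfix)) h4

def PintS (X : Set (List A)) : Set (List A) := {q | ∃ x ∈ X, q <+: x ∧ q ≠ x}

lemma concat_dropLast_getLastD (a₀ : A) (w : List A) (hw : w ≠ []) :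
    w.dropLast ++ [w.getLastD a₀] = w := by
  rcases List.eq_nil_or_concat w with rfl | ⟨t, b, rfl⟩
  · exact absurd rfl hw
  · simp [List.concat_eq_append, List.dropLast_concat, List.getLastD_concat]

lemma win_succ (s : ℕ → A) (i n : ℕ) : win s i (n + 1) = win s i n ++ [s (i + n)] := by
  apply List.ext_getElem (by simp)
  intro t h1 h2
  rw [win_getElem]
  rcases Nat.lt_or_ge t n with h | h
  · rw [List.getElem_append_left (by simpa using h), win_getElem]
  · have : t = n := by simp at h1; omega
    subst this
    rw [List.getElem_append_right (by simp)]
    simp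

end PsiFacts

end Stmt11Aux


open Stmt11Aux

/-- The factor complexity of an `X`-AR word has the linear
lower bound `(card X − 1)·n + c` for all sufficiently large `n`. -/
theorem stmt11 {A : Type*} [Fintype A] (hd : 1 < Fintype.card A)
    (X : Set (List A)) (hfin : X.Finite) (hX : IsMaximalPrefixCode X)
    (y : ℕ → List A) (hy : ∀ i, y i ∈ X)
    (hpers : ∀ x ∈ X, ∀ N : ℕ, ∃ i ≥ N, y i = x)
    (s : ℕ → A)
    (hs : ∀ n : ℕ, PrefixOfInf (psiList (List.ofFn fun i : Fin n => y i.1)) s) :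
    ∃ (ν : ℕ) (c : ℤ), ∀ n : ℕ, n ≥ ν →
      ((X.ncard : ℤ) - 1) * n + c ≤ (complexity s n : ℤ) := by
  classical
  obtain ⟨a₀, b₀, hab⟩ := Fintype.one_lt_card_iff.mp hd
  have hXpc : IsPrefixCode X := hX.1
  have hXne : ∀ x ∈ X, x ≠ [] := hXpc.1
  have hXpp : ∀ x ∈ X, ∀ x' ∈ X, x <+: x' → x = x' := hXpc.2
  have hylen : ∀ m, 1 ≤ (y m).length := fun m => List.length_pos_iff.mpr (hXne _ (hy m))
  have hs' : ∀ m, PrefixOfInf (PmW y m) s := hs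
  have hfactB : ∀ (n : ℕ) (w : List A), (∃ x ∈ X, w <+: x) →
      FactorOfInf ((win s 0 n).reverse ++ w) s := factB hpers hylen hs'
  -- completeness of the maximal prefix code
  have hcomp : ∀ w : List A, w ≠ [] → ∃ x ∈ X, x <+: w ∨ w <+: x := by
    intro w hw
    by_contra hcon
    push_neg at hcon
    have hY : IsPrefixCode (insert w X) := by
      constructor
      · intro x hx
        rcases Set.mem_insert_iff.mp hx with rfl | hx
        · exact hw
        · exact hXne x hx
      · intro x hx z hz hxz
        rcases Set.mem_insert_iff.mp hx with hxw | hx'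
        · rcases Set.mem_insert_iff.mp hz with hzw | hz'
          · rw [hxw, hzw]
          · exact absurd (hxw ▸ hxz) (hcon z hz').2
        · rcases Set.mem_insert_iff.mp hz with hzw | hz'
          · exact absurd (hzw ▸ hxz) (hcon x hx').1
          · exact hXpp x hx' z hz' hxz
    have heq := hX.2 _ hY (Set.subset_insert _ _)
    have hwX : w ∈ X := heq ▸ Set.mem_insert w X
    exact (hcon w hwX).1 (List.prefix_refl w)
  -- letters begin codewords
  have hletter : ∀ a : A, ∃ x ∈ X, [a] <+: x := by
    intro a
    obtain ⟨x, hx, hc⟩ := hcomp [a] (by simp)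
    rcases hc with h | h
    · have h1 : 0 < x.length := List.length_pos_iff.mpr (hXne x hx)
      have h2 : x.length ≤ 1 := by simpa using h.length_le
      have hxe : x = [a] := h.eq_of_length (by simp; omega)
      exact ⟨x, hx, by rw [hxe]⟩
    · exact ⟨x, hx, h⟩
  obtain ⟨xa, hxa, hxaP⟩ := hletter a₀
  obtain ⟨xb, hxb, hxbP⟩ := hletter b₀
  have hxab : xa ≠ xb := by
    rintro rfl
    have h1 : [a₀] <+: [b₀] :=
      List.prefix_of_prefix_length_le hxaP hxbP (by simp)
    have h2 := h1.eq_of_length (by simp)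
    simp at h2
    exact hab h2
  -- non-periodicity
  have hnotper : ∀ p : ℕ, 0 < p → ∃ i, s (i + p) ≠ s i := by
    intro p hp
    by_contra hcon
    push_neg at hcon
    have hmul : ∀ a k, s (a + k * p) = s a := by
      intro a k
      induction k with
      | zero => simp
      | succ k ih =>
        have h1 : a + (k+1) * p = (a + k * p) + p := by ring
        rw [h1, hcon (a + k * p), ih]
    have hmod : ∀ a b : ℕ, a % p = b % p → s a = s b := by
      intro a b h
      have ha := hmul (a % p) (a / p)
      rw [Nat.mod_add_div'] at ha
      have hb := hmul (b % p) (b / p)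
      rw [Nat.mod_add_div'] at hb
      rw [ha, hb, h]
    obtain ⟨i, hi⟩ := factor_getElem (hfactB p xa ⟨xa, hxa, List.prefix_refl _⟩)
    obtain ⟨j, hj⟩ := factor_getElem (hfactB p xb ⟨xb, hxb, List.prefix_refl _⟩)
    have hiv : ∀ t, t < p → s (i + t) = s (p - 1 - t) := by
      intro t ht
      have h1 := hi t (by simp; omega)
      rw [List.getElem_append_left (by simp; omega)] at h1
      rw [vW_getElem s p t (by simp; omega)] at h1
      exact h1.symm
    have hjv : ∀ t, t < p → s (j + t) = s (p - 1 - t) := by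
      intro t ht
      have h1 := hj t (by simp; omega)
      rw [List.getElem_append_left (by simp; omega)] at h1
      rw [vW_getElem s p t (by simp; omega)] at h1
      exact h1.symm
    have hij : ∀ t, s (i + t) = s (j + t) := by
      intro t
      have e1 : s (i + t) = s (i + t % p) := hmod _ _ (by rw [Nat.add_mod_mod])
      have e2 : s (j + t) = s (j + t % p) := hmod _ _ (by rw [Nat.add_mod_mod])
      rw [e1, e2, hiv _ (Nat.mod_lt _ hp), hjv _ (Nat.mod_lt _ hp)]
    have hxaget : ∀ t, ∀ ht : t < xa.length, xa[t] = s (i + p + t) := by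
      intro t ht
      have h1 := hi (p + t) (by simp; omega)
      rw [List.getElem_append_right (by simp)] at h1
      simp only [List.length_reverse, win_length, Nat.add_sub_cancel_left] at h1
      rw [h1]
      congr 1
      omega
    have hxbget : ∀ t, ∀ ht : t < xb.length, xb[t] = s (i + p + t) := by
      intro t ht
      have h1 := hj (p + t) (by simp; omega)
      rw [List.getElem_append_right (by simp)] at h1
      simp only [List.length_reverse, win_length, Nat.add_sub_cancel_left] at h1
      rw [h1]
      rw [← hij (p + t)]
      congr 1
      omega
    have key : ∀ u u' : List A, u ∈ X → u' ∈ X →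
        (∀ t, ∀ ht : t < u.length, u[t] = s (i + p + t)) →
        (∀ t, ∀ ht : t < u'.length, u'[t] = s (i + p + t)) →
        u.length ≤ u'.length → u = u' := by
      intro u u' hu hu' hg hg' hle
      apply hXpp u hu u' hu'
      have htake : u = u'.take u.length := by
        apply List.ext_getElem (by simp [hle])
        intro t h1 h2
        rw [List.getElem_take, hg t h1, hg' t (by omega)]
      rw [htake]
      exact List.take_prefix _ _
    rcases le_total xa.length xb.length with h | h
    · exact hxab (key xa xb hxa hxb hxaget hxbget h)
    · exact hxab ((key xb xa hxb hxa hxbget hxaget h).symm)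
  -- extension of internal nodes stays below a codeword
  have hextcode : ∀ q ∈ PintS X, ∀ a : A, ∃ x ∈ X, q ++ [a] <+: x := by
    rintro q ⟨x₀, hx₀, hqx₀, hqne⟩ a
    obtain ⟨x', hx', hcase⟩ := hcomp (q ++ [a]) (by simp)
    rcases hcase with h | h
    · rcases Nat.lt_or_ge q.length x'.length with hl | hl
      · have hx'len : x'.length = q.length + 1 := by
          have := h.length_le
          simp at this
          omega
        have hx'eq : x' = q ++ [a] := h.eq_of_length (by simp [hx'len])
        exact ⟨x', hx', by rw [hx'eq]⟩
      · exfalso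
        have h1 : x' <+: q :=
          List.prefix_of_prefix_length_le h (List.prefix_append q [a]) hl
        have h2 : x' = x₀ := hXpp x' hx' x₀ hx₀ (h1.trans hqx₀)
        have h3 := hqx₀.length_le
        have h4 := h1.length_le
        rw [h2] at h4
        exact hqne (hqx₀.eq_of_length (by omega))
    · exact ⟨x', hx', h⟩
  -- length bounds
  set Lm : ℕ := hfin.toFinset.sup List.length with hLmdef
  have hLmax : ∀ x ∈ X, x.length ≤ Lm :=
    fun x hx => Finset.le_sup (f := List.length) (hfin.mem_toFinset.mpr hx)
  have hqlenLm : ∀ q ∈ PintS X, q.length < Lm := by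
    rintro q ⟨x, hx, hqx, hqne⟩
    have h1 := hqx.length_le
    have h2 : q.length ≠ x.length := fun h => hqne (hqx.eq_of_length h)
    have h3 := hLmax x hx
    omega
  have hPintFin : (PintS X).Finite := by
    apply (List.finite_length_le A Lm).subset
    rintro q ⟨x, hx, hqx, -⟩
    exact le_trans hqx.length_le (hLmax x hx)
  -- witnesses of non-periodicity
  set g : ℕ → ℕ := fun p => if hp : 0 < p then (hnotper p hp).choose else 0 with hgdef
  have hgspec : ∀ p, ∀ hp : 0 < p, s (g p + p) ≠ s (g p) := by
    intro p hp
    simp only [hgdef, dif_pos hp]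
    exact (hnotper p hp).choose_spec
  set M : ℕ := (Finset.range (Lm + 1)).sup g with hMdef
  have hgM : ∀ p, p ≤ Lm → g p ≤ M :=
    fun p hp => Finset.le_sup (Finset.mem_range.mpr (by omega))
  set ν : ℕ := M + 2 * Lm + 2 with hνdef
  -- injectivity of internal-node markers at each level ≥ ν
  have hinj : ∀ ℓ, ν ≤ ℓ →
      Set.InjOn (fun q => (win s 0 (ℓ - q.length)).reverse ++ q) (PintS X) := by
    intro ℓ hℓ
    have key : ∀ q ∈ PintS X, ∀ q' ∈ PintS X, q.length < q'.length →
        (win s 0 (ℓ - q.length)).reverse ++ q ≠ (win s 0 (ℓ - q'.length)).reverse ++ q' := by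
      intro q hq q' hq' hlt heq
      have hqL := hqlenLm q hq
      have hq'L := hqlenLm q' hq'
      have hLℓ : Lm + Lm + M + 2 ≤ ℓ := by omega
      set m := ℓ - q.length with hm
      set m' := ℓ - q'.length with hm'
      have hm'm : m' < m := by omega
      set p := m - m' with hpdef
      have hp1 : 0 < p := by omega
      have hpL : p ≤ Lm := by omega
      set u := g p with hudef
      have hu : u < m' := by
        have := hgM p hpL
        omega
      have hidx : m' - 1 - u < m' := by omega
      have h1 : ((win s 0 m).reverse ++ q)[m' - 1 - u]'(by simp; omega)
          = ((win s 0 m').reverse ++ q')[m' - 1 - u]'(by simp; omega) :=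
        List.getElem_of_eq heq _
      rw [List.getElem_append_left (by simp; omega),
          List.getElem_append_left (by simp; omega)] at h1
      rw [vW_getElem s m _ (by simp; omega), vW_getElem s m' _ (by simp; omega)] at h1
      have e1 : m - 1 - (m' - 1 - u) = u + p := by omega
      have e2 : m' - 1 - (m' - 1 - u) = u := by omega
      rw [e1, e2] at h1
      exact hgspec p hp1 h1
    intro q hq q' hq' heq
    simp only at heq
    rcases lt_trichotomy q.length q'.length with h | h | h
    · exact absurd heq (key q hq q' hq' h)
    · have hvlen : ((win s 0 (ℓ - q.length)).reverse).length
          = ((win s 0 (ℓ - q'.length)).reverse).length := by simp [h]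
      exact (List.append_inj heq hvlen).2
    · exact absurd heq.symm (key q' hq' q hq h)
  -- factor sets as finsets
  have hFfin : ∀ n : ℕ, {u : List A | u.length = n ∧ FactorOfInf u s}.Finite := by
    intro n
    apply (List.finite_length_le A n).subset
    rintro u ⟨h1, -⟩
    simp [h1]
  have hcompl : ∀ n, complexity s n = ((hFfin n).toFinset).card := by
    intro n
    rw [complexity, Set.ncard_eq_toFinset_card _ (hFfin n)]
  set I : ℕ := hPintFin.toFinset.card with hIdef
  set Kc : ℕ := X.ncard with hKdef
  set d : ℕ := Fintype.card A with hddef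
  have hXtc : Kc = hfin.toFinset.card := by
    rw [hKdef, Set.ncard_eq_toFinset_card _ hfin]
  have hPt_nil : ([] : List A) ∈ hPintFin.toFinset := by
    rw [Set.Finite.mem_toFinset]
    exact ⟨xa, hxa, List.nil_prefix, fun h => (hXne xa hxa) h.symm⟩
  have hIpos : 1 ≤ I := Finset.card_pos.mpr ⟨[], hPt_nil⟩
  have hKpos : 1 ≤ Kc := by
    rw [hXtc]
    exact Finset.card_pos.mpr ⟨xa, hfin.mem_toFinset.mpr hxa⟩
  -- the tree bound : Kc - 1 ≤ (d - 1) * I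
  have hXPdisj : Disjoint hfin.toFinset (hPintFin.toFinset.erase ([] : List A)) := by
    apply Finset.disjoint_left.mpr
    intro x hx1 hx2
    have hx : x ∈ X := hfin.mem_toFinset.mp hx1
    have hxP : x ∈ PintS X := hPintFin.mem_toFinset.mp (Finset.mem_of_mem_erase hx2)
    obtain ⟨x', hx', hxx', hne⟩ := hxP
    exact hne (hXpp x hx x' hx' hxx')
  have hUcard : (hfin.toFinset ∪ hPintFin.toFinset.erase []).card = Kc + (I - 1) := by
    rw [Finset.card_union_of_disjoint hXPdisj, Finset.card_erase_of_mem hPt_nil, hXtc]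
  have hUle : (hfin.toFinset ∪ hPintFin.toFinset.erase []).card
      ≤ (hPintFin.toFinset ×ˢ (Finset.univ : Finset A)).card := by
    apply Finset.card_le_card_of_injOn (fun w => (w.dropLast, w.getLastD a₀))
    · intro w hw
      have hwne : w ≠ [] := by
        rcases Finset.mem_union.mp hw with h | h
        · exact hXne w (hfin.mem_toFinset.mp h)
        · exact Finset.ne_of_mem_erase h
      apply Finset.mem_product.mpr
      refine ⟨?_, Finset.mem_univ _⟩
      rw [Set.Finite.mem_toFinset]
      rcases Finset.mem_union.mp hw with h | h
      · refine ⟨w, hfin.mem_toFinset.mp h, List.dropLast_prefix w, ?_⟩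
        intro hcon2
        have hl1 := congrArg List.length hcon2
        rw [List.length_dropLast] at hl1
        have hl3 : 0 < w.length := List.length_pos_iff.mpr hwne
        omega
      · have hxP := hPintFin.mem_toFinset.mp (Finset.mem_of_mem_erase h)
        obtain ⟨x', hx', hxx', hne⟩ := hxP
        refine ⟨x', hx', (List.dropLast_prefix w).trans hxx', ?_⟩
        intro hcon2
        have hl1 := congrArg List.length hcon2
        rw [List.length_dropLast] at hl1
        have hl2 := hxx'.length_le
        have hl3 : 0 < w.length := List.length_pos_iff.mpr hwne
        omega
    · intro w1 hw1 w2 hw2 heq2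
      have hne1 : w1 ≠ [] := by
        rcases Finset.mem_union.mp hw1 with h | h
        · exact hXne w1 (hfin.mem_toFinset.mp h)
        · exact Finset.ne_of_mem_erase h
      have hne2 : w2 ≠ [] := by
        rcases Finset.mem_union.mp hw2 with h | h
        · exact hXne w2 (hfin.mem_toFinset.mp h)
        · exact Finset.ne_of_mem_erase h
      simp only [Prod.mk.injEq] at heq2
      rw [← concat_dropLast_getLastD a₀ w1 hne1, ← concat_dropLast_getLastD a₀ w2 hne2,
        heq2.1, heq2.2]
  have hIbound : Kc - 1 ≤ (d - 1) * I := by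
    have hcardP : (hPintFin.toFinset ×ˢ (Finset.univ : Finset A)).card = I * d := by
      rw [Finset.card_product, Finset.card_univ, ← hddef, hIdef]
    have hdm : (d - 1) * I + I = I * d := by
      have h3 : d - 1 + 1 = d := by omega
      calc (d - 1) * I + I = ((d - 1) + 1) * I := by ring
        _ = d * I := by rw [h3]
        _ = I * d := by ring
    omega
  -- the per-level growth
  have hlevel : ∀ ℓ, ν ≤ ℓ →
      ((hFfin ℓ).toFinset).card + (Kc - 1) ≤ ((hFfin (ℓ + 1)).toFinset).card := by
    intro ℓ hℓ
    have hF0mem : ∀ u : List A, u ∈ (hFfin ℓ).toFinset ↔ u.length = ℓ ∧ FactorOfInf u s :=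
      fun u => Set.Finite.mem_toFinset _
    have hF1mem : ∀ u : List A,
        u ∈ (hFfin (ℓ + 1)).toFinset ↔ u.length = ℓ + 1 ∧ FactorOfInf u s :=
      fun u => Set.Finite.mem_toFinset _
    set St := hPintFin.toFinset.image
      (fun q => (win s 0 (ℓ - q.length)).reverse ++ q) with hStdef
    have hStcard : St.card = I := by
      rw [hStdef, hIdef]
      apply Finset.card_image_of_injOn
      intro q hq q' hq' h
      exact hinj ℓ hℓ (hPintFin.mem_toFinset.mp hq) (hPintFin.mem_toFinset.mp hq') h
    have hStF : St ⊆ (hFfin ℓ).toFinset := by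
      intro w hw
      rw [hStdef] at hw
      obtain ⟨q, hq, rfl⟩ := Finset.mem_image.mp hw
      have hqP : q ∈ PintS X := hPintFin.mem_toFinset.mp hq
      rw [hF0mem]
      obtain ⟨x, hx, hqx, -⟩ := hqP
      constructor
      · have := hqlenLm q (hPintFin.mem_toFinset.mp hq)
        simp
        omega
      · exact hfactB _ q ⟨x, hx, hqx⟩
    set E : List A → Finset (List A) :=
      fun w => (hFfin (ℓ + 1)).toFinset.filter (fun u => u.dropLast = w) with hEdef
    have hcover : (hFfin (ℓ + 1)).toFinset = (hFfin ℓ).toFinset.biUnion E := by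
      apply Finset.ext
      intro u
      constructor
      · intro hu
        rcases (hF1mem u).mp hu with ⟨hlen, hfac⟩
        apply Finset.mem_biUnion.mpr
        refine ⟨u.dropLast, ?_, ?_⟩
        · rw [hF0mem]
          constructor
          · rw [List.length_dropLast, hlen]
            omega
          · exact factor_infix (List.dropLast_prefix u).isInfix hfac
        · simp only [hEdef]
          exact Finset.mem_filter.mpr ⟨hu, rfl⟩
      · intro hu
        obtain ⟨w, -, hw⟩ := Finset.mem_biUnion.mp hu
        simp only [hEdef] at hw
        exact (Finset.mem_filter.mp hw).1
    have hdisj : ∀ w1 ∈ (hFfin ℓ).toFinset, ∀ w2 ∈ (hFfin ℓ).toFinset,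
        w1 ≠ w2 → Disjoint (E w1) (E w2) := by
      intro w1 _ w2 _ hne
      apply Finset.disjoint_left.mpr
      intro u hu1 hu2
      simp only [hEdef] at hu1 hu2
      exact hne ((Finset.mem_filter.mp hu1).2.symm.trans (Finset.mem_filter.mp hu2).2)
    have hcard1 : ((hFfin (ℓ + 1)).toFinset).card = ∑ w ∈ (hFfin ℓ).toFinset, (E w).card := by
      rw [hcover]
      exact Finset.card_biUnion hdisj
    have hlow1 : ∀ w ∈ (hFfin ℓ).toFinset, 1 ≤ (E w).card := by
      intro w hw
      rcases (hF0mem w).mp hw with ⟨hlen, hfac⟩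
      obtain ⟨i, hwin⟩ := hfac
      have hfac2 : FactorOfInf (w ++ [s (i + ℓ)]) s := by
        have hwwin : w = win s i ℓ := by rw [← hlen]; exact hwin
        rw [hwwin, ← win_succ]
        exact factor_win s i (ℓ + 1)
      refine Finset.card_pos.mpr ⟨w ++ [s (i + ℓ)], ?_⟩
      simp only [hEdef]
      apply Finset.mem_filter.mpr
      exact ⟨(hF1mem _).mpr ⟨by simp [hlen], hfac2⟩, List.dropLast_concat⟩
    have hlowd : ∀ w ∈ St, d ≤ (E w).card := by
      intro w hw
      rw [hStdef] at hw
      obtain ⟨q, hq, rfl⟩ := Finset.mem_image.mp hw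
      have hqP : q ∈ PintS X := hPintFin.mem_toFinset.mp hq
      have hsub : Finset.univ.image
          (fun a : A => ((win s 0 (ℓ - q.length)).reverse ++ q) ++ [a])
          ⊆ E ((win s 0 (ℓ - q.length)).reverse ++ q) := by
        intro u hu
        obtain ⟨a, -, rfl⟩ := Finset.mem_image.mp hu
        simp only [hEdef]
        apply Finset.mem_filter.mpr
        constructor
        · apply (hF1mem _).mpr
          constructor
          · have := hqlenLm q hqP
            simp
            omega
          · have hassoc : ((win s 0 (ℓ - q.length)).reverse ++ q) ++ [a]
                = (win s 0 (ℓ - q.length)).reverse ++ (q ++ [a]) := by simp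
            rw [hassoc]
            exact hfactB _ (q ++ [a]) (hextcode q hqP a)
        · exact List.dropLast_concat
      have hinjA : Function.Injective
          (fun a : A => ((win s 0 (ℓ - q.length)).reverse ++ q) ++ [a]) := by
        intro a b hab2
        simpa using hab2
      calc d = (Finset.univ : Finset A).card := by rw [hddef, Finset.card_univ]
        _ = (Finset.univ.image
            (fun a : A => ((win s 0 (ℓ - q.length)).reverse ++ q) ++ [a])).card :=
          (Finset.card_image_of_injective _ hinjA).symm
        _ ≤ _ := Finset.card_le_card hsub
    have hsplit : ∑ w ∈ (hFfin ℓ).toFinset, (E w).card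
        = ∑ w ∈ (hFfin ℓ).toFinset \ St, (E w).card + ∑ w ∈ St, (E w).card :=
      (Finset.sum_sdiff hStF).symm
    have h1 : ((hFfin ℓ).toFinset \ St).card ≤ ∑ w ∈ (hFfin ℓ).toFinset \ St, (E w).card := by
      have := Finset.card_nsmul_le_sum ((hFfin ℓ).toFinset \ St) (fun w => (E w).card) 1
        (fun w hw => hlow1 w (Finset.mem_sdiff.mp hw).1)
      simpa using this
    have h2 : I * d ≤ ∑ w ∈ St, (E w).card := by
      have := Finset.card_nsmul_le_sum St (fun w => (E w).card) d hlowd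
      rw [hStcard] at this
      simpa [mul_comm] using this
    have hsd : ((hFfin ℓ).toFinset \ St).card = ((hFfin ℓ).toFinset).card - I := by
      rw [Finset.card_sdiff_of_subset hStF, hStcard]
    have hIle : I ≤ ((hFfin ℓ).toFinset).card := by
      rw [← hStcard]
      exact Finset.card_le_card hStF
    have hdm : (d - 1) * I + I = I * d := by
      have h3 : d - 1 + 1 = d := by omega
      calc (d - 1) * I + I = ((d - 1) + 1) * I := by ring
        _ = d * I := by rw [h3]
        _ = I * d := by ring
    omega
  -- telescoping
  have htel : ∀ j : ℕ, (Kc - 1) * j ≤ ((hFfin (ν + j)).toFinset).card := by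
    intro j
    induction j with
    | zero => simp
    | succ j ih =>
      have h1 := hlevel (ν + j) (by omega)
      have h2 : (Kc - 1) * (j + 1) = (Kc - 1) * j + (Kc - 1) := by ring
      show (Kc - 1) * (j + 1) ≤ ((hFfin (ν + j + 1)).toFinset).card
      omega
  refine ⟨ν, -(((Kc : ℤ) - 1) * (ν : ℤ)), ?_⟩
  intro n hn
  have h1 := htel (n - ν)
  have h2 : ν + (n - ν) = n := by omega
  rw [h2] at h1
  rw [hcompl n]
  have h4 : (((Kc - 1) * (n - ν) : ℕ) : ℤ)
      = ((Kc : ℤ) - 1) * (n : ℤ) - ((Kc : ℤ) - 1) * (ν : ℤ) := by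
    push_cast [Nat.cast_sub hn, Nat.cast_sub hKpos]
    ring
  have h5 : (((Kc - 1) * (n - ν) : ℕ) : ℤ) ≤ (((hFfin n).toFinset).card : ℤ) :=
    Int.ofNat_le.mpr h1
  rw [h4] at h5
  linarith
end

section
/- Let X be a code over A, z ∈ X*, and y ∈ X. Suppose ψ_X(z) has at least one palindromic prefix P such that Py is a prefix of ψ_X(z), and let Δ_y be the longest such palindromic prefix. Then ψ_X(zy) = ψ_X(z) Δ_y^{-1} ψ_X(z), where ψ_X(z) Δ_y^{-1} denotes the word obtained from ψ_X(z) by erasing its suffix Δ_y (note that Δ_y, being a palindromic prefix of the palindrome ψ_X(z), is also a suffix of ψ_X(z)). -/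
open List

/-
Write `P = Δ y r` with `P` palindromic, so that also `P = r̃ ỹ Δ`. Then `P y = r̃ · (ỹ Δ y)` and
`ỹ Δ y` is a palindromic suffix; any longer palindromic suffix would have the form `ỹ S y` with
`S` a palindrome and, reading `P` backwards, `S y` a prefix of `P`, contradicting the maximality
of `Δ`. Hence `(P y)⁺ = P y r = r̃ ỹ P`.
-/

section Palindromes

variable {α : Type*}

theorem exists_palindrome_of_reverse_append_eq {S y : List α}
    (h : (S ++ y).reverse = S ++ y) (hy : y.length ≤ S.length) :
    ∃ S', S = y.reverse ++ S' ∧ S'.reverse = S' := by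
  have hpre : y.reverse <+: S :=
    prefix_of_prefix_length_le (h ▸ by simp) (prefix_append S y) (by simpa using hy)
  obtain ⟨S', rfl⟩ := hpre
  refine ⟨S', rfl, ?_⟩
  simpa using h

theorem exists_eq_append_of_suffix_append {Q P y : List α} (h : Q <:+ P ++ y)
    (hy : y.length ≤ Q.length) : ∃ S, S <:+ P ∧ Q = S ++ y := by
  obtain ⟨S, rfl⟩ := suffix_of_suffix_length_le (suffix_append P y) h hy
  exact ⟨S, suffix_append_self_iff.mp h, rfl⟩

theorem exists_palClosure_eq (w : List α) :
    ∃ k, (w.drop k).reverse = w.drop k ∧ (∀ j < k, (w.drop j).reverse ≠ w.drop j) ∧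
      palClosure w = w ++ (w.take k).reverse := by
  -- the decidability instance of `palClosure`, so that `rfl` closes the last component
  let : DecidablePred fun k => (w.drop k).reverse = w.drop k :=
    fun _ => Classical.propDecidable _
  have hex : ∃ k, (w.drop k).reverse = w.drop k := ⟨w.length, by simp⟩
  exact ⟨_, Nat.find_spec hex, fun _ => Nat.find_min hex, rfl⟩

theorem palClosure_eq_of_longest_suffix {w u Q : List α} (hw : w = u ++ Q)
    (hQ : Q.reverse = Q)
    (hmax : ∀ Q' : List α, Q' <:+ w → Q'.reverse = Q' → Q'.length ≤ Q.length) :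
    palClosure w = w ++ u.reverse := by
  obtain ⟨k, hk, hmin, hclosure⟩ := exists_palClosure_eq w
  have hle : k ≤ u.length := by
    by_contra! hlt
    exact hmin _ hlt (by simpa [hw] using hQ)
  have hge : u.length ≤ k := by
    have := hmax _ (drop_suffix k w) hk
    simp only [length_drop, hw, length_append] at this
    omega
  rw [hclosure, le_antisymm hle hge, hw, take_left]

theorem palClosure_reverse (w : List α) : (palClosure w).reverse = palClosure w := by
  obtain ⟨k, hk, -, hclosure⟩ := exists_palClosure_eq w
  have hw := take_append_drop k w
  rw [hclosure]
  generalize w.take k = u, w.drop k = Q at hw hk ⊢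
  subst hw
  simp [hk]

theorem palClosure_append_eq_of_longest_prefix {P y Δ : List α} (hP : P.reverse = P)
    (hpal : Δ.reverse = Δ) (hpref : Δ ++ y <+: P)
    (hmax : ∀ P' : List α, P'.reverse = P' → P' ++ y <+: P → P'.length ≤ Δ.length) :
    palClosure (P ++ y) = P.take (P.length - Δ.length) ++ P := by
  obtain ⟨r, hr⟩ := hpref
  have hP' : P = r.reverse ++ y.reverse ++ Δ := by
    conv_lhs => rw [← hP, ← hr]
    simp [hpal]
  have hlongest (Q' : List α) (hQ' : Q' <:+ P ++ y) (hQ'pal : Q'.reverse = Q') :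
      Q'.length ≤ (y.reverse ++ Δ ++ y).length := by
    by_contra! hlong
    simp only [length_append, length_reverse] at hlong
    obtain ⟨S, hSP, rfl⟩ := exists_eq_append_of_suffix_append hQ' (by omega)
    rw [length_append] at hlong
    obtain ⟨S', rfl, hS'⟩ := exists_palindrome_of_reverse_append_eq hQ'pal (by omega)
    have hS'y : S' ++ y <+: P := by
      simpa [← reverse_suffix, hP, hS'] using hSP
    have := hmax S' hS' hS'y
    simp only [length_append, length_reverse] at hlong
    omega
  have hclosure : palClosure (P ++ y) = P ++ y ++ r :=
    (palClosure_eq_of_longest_suffix (u := r.reverse) (by rw [hP']; simp) (by simp [hpal])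
      hlongest).trans (by simp)
  have htake : P.take (P.length - Δ.length) = r.reverse ++ y.reverse := by
    rw [hP', take_left' (by simp; omega)]
  rw [hclosure, htake]
  conv_lhs => rw [hP']
  conv_rhs => rw [← hr]
  simp

end Palindromes

theorem psiList_append_singleton {A : Type*} (l : List (List A)) (y : List A) :
    psiList (l ++ [y]) = palClosure (psiList l ++ y) := by
  simp [psiList, foldl_append]

theorem psiList_reverse {A : Type*} (l : List (List A)) :
    (psiList l).reverse = psiList l := by
  induction l using reverseRecOn with
  | nil => simp [psiList]
  | append_singleton l y _ => rw [psiList_append_singleton]; exact palClosure_reverse _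

theorem stmt12_general {A : Type*}
    (l : List (List A)) (y : List A)
    (Δ : List A) (hpal : Δ.reverse = Δ) (hpref : Δ ++ y <+: psiList l)
    (hmax : ∀ P : List A, P.reverse = P → P ++ y <+: psiList l →
      P.length ≤ Δ.length) :
    psiList (l ++ [y]) =
      (psiList l).take ((psiList l).length - Δ.length) ++ psiList l := by
  rw [psiList_append_singleton]
  exact palClosure_append_eq_of_longest_prefix (psiList_reverse l) hpal hpref hmax

/-- If `ψ_X(z)` has palindromic prefixes followed by `y ∈ X`
and `Δ` is the longest one, then `ψ_X(zy) = ψ_X(z) Δ⁻¹ ψ_X(z)`. -/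
theorem stmt12 {A : Type*} [Fintype A] (X : Set (List A)) (hX : IsCode X)
    (l : List (List A)) (hl : ∀ w ∈ l, w ∈ X) (y : List A) (hy : y ∈ X)
    (Δ : List A) (hpal : Δ.reverse = Δ) (hpref : Δ ++ y <+: psiList l)
    (hmax : ∀ P : List A, P.reverse = P → P ++ y <+: psiList l →
      P.length ≤ Δ.length) :
    psiList (l ++ [y]) =
      (psiList l).take ((psiList l).length - Δ.length) ++ psiList l :=
  stmt12_general l y Δ hpal hpref hmax
end
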